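/- Let P be a prime implication filter of an MV-algebra and p ∈ P with p ∉ ℓ(P). Then there exists a minimal prime implication filter m ⊆ P with p ∉ m. -/

import Mathlib

/-- An MV-algebra `(α, ⊕, ¬, 0)` with the standard axioms. -/
class MV (α : Type*) extends Add α, Neg α, Zero α where
  add_assoc : ∀ a b c : α, a + (b + c) = (a + b) + c
  add_comm : ∀ a b : α, a + b = b + a
  add_zero : ∀ a : α, a + 0 = a
  neg_neg : ∀ a : α, - -a = a
  add_neg_zero : ∀ a : α, a + -(0 : α) = -(0 : α)
  luk : ∀ a b : α, -(-a + b) + b = -(-b + a) + a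

namespace MV

variable {α : Type*} [MV α]

/-- The top element `1 = ¬0`. -/
def one (α : Type*) [MV α] : α := -(0 : α)

/-- Implication `x → y = ¬x ⊕ y`. -/
def imp (a b : α) : α := -a + b

/-- Strong conjunction `x ⊗ y = ¬(¬x ⊕ ¬y)`. -/
def otimes (a b : α) : α := -(-a + -b)

/-- Join `x ∨ y = (x → y) → y`. -/
def sup (a b : α) : α := imp (imp a b) b

/-- Meet `x ∧ y = ¬(¬x ∨ ¬y)`. -/
def inf (a b : α) : α := -(sup (-a) (-b))

/-- Order: `x ≤ y` iff `x → y = 1`. -/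
def le (a b : α) : Prop := imp a b = one α

/-- Strict order. -/
def lt (a b : α) : Prop := le a b ∧ a ≠ b

/-- `n`-fold `⊗`-power. -/
def pow (a : α) : ℕ → α
  | 0 => one α
  | n + 1 => otimes a (pow a n)

/-- An implication filter: a lattice filter closed under `⊗`. -/
def IsImpFilter (F : Set α) : Prop :=
  one α ∈ F ∧ (∀ x ∈ F, ∀ y : α, le x y → y ∈ F) ∧
    (∀ x ∈ F, ∀ y ∈ F, inf x y ∈ F) ∧ (∀ x ∈ F, ∀ y ∈ F, otimes x y ∈ F)

/-- A prime implication filter: proper and `x ∨ y ∈ F → x ∈ F ∨ y ∈ F`. -/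
def IsPrime (F : Set α) : Prop :=
  IsImpFilter F ∧ F ≠ Set.univ ∧ ∀ x y : α, sup x y ∈ F → x ∈ F ∨ y ∈ F

/-- A minimal prime implication filter. -/
def IsMinimalPrime (F : Set α) : Prop :=
  IsPrime F ∧ ∀ G : Set α, IsPrime G → G ⊆ F → G = F

/-- A maximal proper implication filter. -/
def IsMaximal (F : Set α) : Prop :=
  IsImpFilter F ∧ F ≠ Set.univ ∧
    ∀ G : Set α, IsImpFilter G → G ≠ Set.univ → F ⊆ G → G = F

/-- A counit: `u < 1` joining to `1` with some `v < 1`. -/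
def IsCounit (u : α) : Prop :=
  lt u (one α) ∧ ∃ v : α, lt v (one α) ∧ sup u v = one α

/-- The implication filter generated by a set. -/
def gen (S : Set α) : Set α := ⋂₀ {F : Set α | IsImpFilter F ∧ S ⊆ F}

/-- The Conrad filter: the implication filter generated by all counits. -/
def conrad (α : Type*) [MV α] : Set α := gen {u : α | IsCounit u}

/-- The localizing filter `ℓ(P)`, generated by `{x → p : p ∈ P, x ∉ P}`. -/
def locFilter (P : Set α) : Set α :=
  gen {z : α | ∃ x : α, x ∉ P ∧ ∃ p ∈ P, z = imp x p}

end MV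

open MV

/-!
`ℓ(P)` is an implication filter not containing `p`. By Zorn's lemma it extends to an implication
filter `Q` maximal with `p ∉ Q`, and such a `Q` is prime: if `x ∨ y ∈ Q` with `x, y ∉ Q`, then
maximality gives `m ⊗ xⁿ ≤ p` and `m ⊗ yᵏ ≤ p` for some `m ∈ Q`, while `(x ∨ y)ⁿ⁺ᵏ ≤ xⁿ ∨ yᵏ`.
Moreover `Q ⊆ P`: for `x ∈ Q \ P` we have `x → p ∈ ℓ(P) ⊆ Q`, so `p ≥ x ⊗ (x → p)` lies in `Q`.
Finally `Q` contains a minimal prime, since the intersection of a chain of primes is prime.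
-/

namespace MV

variable {α : Type*} [MV α]

theorem zero_add (a : α) : 0 + a = a := by rw [MV.add_comm, MV.add_zero]

theorem add_one (a : α) : a + one α = one α := MV.add_neg_zero a

theorem one_add (a : α) : one α + a = one α := by rw [MV.add_comm, add_one]

theorem neg_one : -one α = 0 := MV.neg_neg 0

theorem neg_add_self (a : α) : -a + a = one α := by
  simpa only [add_one, neg_one, zero_add] using (MV.luk a (one α)).symm

theorem le_iff_exists_add' {a b : α} : le a b ↔ ∃ z, b = z + a := by
  constructor
  · intro h
    refine ⟨-(-b + a), ?_⟩
    simpa only [show -a + b = one α from h, neg_one, zero_add] using (MV.luk b a).symm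
  · rintro ⟨z, rfl⟩
    show -a + (z + a) = one α
    rw [MV.add_comm z a, MV.add_assoc, neg_add_self, one_add]

theorem le_refl (a : α) : le a a := neg_add_self a

theorem le_one (a : α) : le a (one α) := add_one (-a)

theorem le_trans {a b c : α} (h₁ : le a b) (h₂ : le b c) : le a c := by
  obtain ⟨z, rfl⟩ := le_iff_exists_add'.mp h₁
  obtain ⟨w, rfl⟩ := le_iff_exists_add'.mp h₂
  exact le_iff_exists_add'.mpr ⟨w + z, MV.add_assoc w z a⟩

theorem add_le_add_left {a b : α} (h : le a b) (c : α) : le (c + a) (c + b) := by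
  obtain ⟨z, rfl⟩ := le_iff_exists_add'.mp h
  refine le_iff_exists_add'.mpr ⟨z, ?_⟩
  rw [MV.add_assoc, MV.add_assoc, MV.add_comm z c]

theorem neg_le_neg {a b : α} (h : le a b) : le (-b) (-a) := by
  show - -b + -a = one α
  rw [MV.neg_neg, MV.add_comm]
  exact h

theorem sup_comm (a b : α) : sup a b = sup b a := MV.luk a b

theorem le_sup_right (a b : α) : le b (sup a b) :=
  le_iff_exists_add'.mpr ⟨-imp a b, rfl⟩

theorem le_sup_left (a b : α) : le a (sup a b) := by
  rw [sup_comm]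
  exact le_sup_right b a

theorem imp_le_imp_left {a b : α} (h : le a b) (c : α) : le (imp b c) (imp a c) := by
  show le (-b + c) (-a + c)
  rw [MV.add_comm (-b), MV.add_comm (-a)]
  exact add_le_add_left (neg_le_neg h) c

theorem sup_le {a b c : α} (ha : le a c) (hb : le b c) : le (sup a b) c := by
  have hac : sup a c = c := by
    show -imp a c + c = c
    rw [show imp a c = one α from ha, neg_one, zero_add]
  rw [← hac, sup_comm a b, sup_comm a c]
  exact imp_le_imp_left (imp_le_imp_left hb a) a

theorem le_inf {a b c : α} (ha : le c a) (hb : le c b) : le c (inf a b) := by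
  have h := neg_le_neg (sup_le (neg_le_neg ha) (neg_le_neg hb))
  rwa [MV.neg_neg] at h

theorem otimes_comm (a b : α) : otimes a b = otimes b a := by
  unfold otimes
  rw [MV.add_comm]

theorem otimes_assoc (a b c : α) : otimes (otimes a b) c = otimes a (otimes b c) := by
  unfold otimes
  rw [MV.neg_neg, MV.neg_neg, MV.add_assoc]

theorem otimes_one (a : α) : otimes a (one α) = a := by
  unfold otimes
  rw [neg_one, MV.add_zero, MV.neg_neg]

theorem one_otimes (a : α) : otimes (one α) a = a := by
  rw [otimes_comm, otimes_one]

theorem otimes_otimes_otimes_comm (a b c d : α) :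
    otimes (otimes a b) (otimes c d) = otimes (otimes a c) (otimes b d) := by
  rw [otimes_assoc, ← otimes_assoc b, otimes_comm b c, otimes_assoc c, ← otimes_assoc]

theorem otimes_le_iff_le_imp {a b c : α} : le (otimes a b) c ↔ le a (imp b c) := by
  show - -(-a + -b) + c = one α ↔ -a + (-b + c) = one α
  rw [MV.neg_neg, MV.add_assoc]

theorem otimes_le_otimes_left {a b : α} (h : le a b) (c : α) :
    le (otimes c a) (otimes c b) :=
  neg_le_neg (add_le_add_left (neg_le_neg h) (-c))

theorem otimes_le_otimes_right {a b : α} (h : le a b) (c : α) :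
    le (otimes a c) (otimes b c) := by
  rw [otimes_comm a, otimes_comm b]
  exact otimes_le_otimes_left h c

theorem otimes_le_otimes {a b c d : α} (hac : le a c) (hbd : le b d) :
    le (otimes a b) (otimes c d) :=
  le_trans (otimes_le_otimes_right hac b) (otimes_le_otimes_left hbd c)

theorem otimes_le_left (a b : α) : le (otimes a b) a :=
  otimes_le_iff_le_imp.mpr (le_iff_exists_add'.mpr ⟨-b, rfl⟩)

theorem otimes_le_right (a b : α) : le (otimes a b) b := by
  rw [otimes_comm]
  exact otimes_le_left b a

theorem otimes_le_inf (a b : α) : le (otimes a b) (inf a b) :=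
  le_inf (otimes_le_left a b) (otimes_le_right a b)

theorem otimes_imp_le (a b : α) : le (otimes a (imp a b)) b := by
  rw [otimes_comm]
  exact otimes_le_iff_le_imp.mpr (le_refl _)

theorem otimes_sup_le (a b c : α) :
    le (otimes a (sup b c)) (sup (otimes a b) (otimes a c)) := by
  rw [otimes_comm]
  refine otimes_le_iff_le_imp.mpr (sup_le ?_ ?_) <;> rw [← otimes_le_iff_le_imp, otimes_comm]
  exacts [le_sup_left _ _, le_sup_right _ _]

theorem sup_otimes_le (a b c : α) :
    le (otimes (sup a b) c) (sup (otimes a c) (otimes b c)) := by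
  simpa only [otimes_comm c] using otimes_sup_le c a b

theorem otimes_le_sup_otimes_of_le {a b c u : α} (h : le u (sup b c)) :
    le (otimes a u) (sup (otimes a b) c) :=
  le_trans (le_trans (otimes_le_otimes_left h a) (otimes_sup_le a b c))
    (sup_le (le_sup_left _ _) (le_trans (otimes_le_right a c) (le_sup_right _ _)))

theorem pow_add (a : α) (m n : ℕ) : pow a (m + n) = otimes (pow a m) (pow a n) := by
  induction m with
  | zero => rw [Nat.zero_add, pow, one_otimes]
  | succ k ih => rw [Nat.succ_add, pow, pow, ih, otimes_assoc]

theorem pow_sup_add_le (a b : α) (n k : ℕ) :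
    le (pow (sup a b) (n + k)) (sup (pow a n) (pow b k)) := by
  induction n generalizing k with
  | zero => exact le_trans (le_one _) (le_sup_left _ _)
  | succ n ihn =>
    induction k with
    | zero => exact le_trans (le_one _) (le_sup_right _ _)
    | succ k ihk =>
      rw [show n + 1 + (k + 1) = n + 1 + k + 1 by omega, pow]
      refine le_trans (sup_otimes_le _ _ _) (sup_le ?_ ?_)
      · rw [show n + 1 + k = n + (k + 1) by omega]
        exact otimes_le_sup_otimes_of_le (ihn (k + 1))
      · rw [sup_comm (pow a _)]
        exact otimes_le_sup_otimes_of_le (sup_comm (pow a _) _ ▸ ihk)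

theorem isImpFilter_of_otimes_mem {F : Set α} (h₁ : one α ∈ F)
    (hle : ∀ x ∈ F, ∀ y, le x y → y ∈ F) (hotimes : ∀ x ∈ F, ∀ y ∈ F, otimes x y ∈ F) :
    IsImpFilter F :=
  ⟨h₁, hle, fun x hx y hy => hle _ (hotimes x hx y hy) _ (otimes_le_inf x y), hotimes⟩

theorem IsImpFilter.pow_mem {F : Set α} (hF : IsImpFilter F) {a : α} (ha : a ∈ F) (n : ℕ) :
    pow a n ∈ F := by
  induction n with
  | zero => exact hF.1
  | succ n ih => exact hF.2.2.2 a ha _ ih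

theorem isImpFilter_sInter {S : Set (Set α)} (hS : ∀ F ∈ S, IsImpFilter F) :
    IsImpFilter (⋂₀ S) := by
  refine isImpFilter_of_otimes_mem (Set.mem_sInter.mpr fun F hF => (hS F hF).1) ?_ ?_
  · exact fun x hx y hxy F hF => (hS F hF).2.1 x (hx F hF) y hxy
  · exact fun x hx y hy F hF => (hS F hF).2.2.2 x (hx F hF) y (hy F hF)

theorem isImpFilter_gen (S : Set α) : IsImpFilter (gen S) :=
  isImpFilter_sInter fun _ hF => hF.1

theorem subset_gen (S : Set α) : S ⊆ gen S :=
  fun _ hx _ hF => hF.2 hx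

theorem isImpFilter_sUnion_of_isChain {c : Set (Set α)} (hc : IsChain (· ⊆ ·) c)
    (hne : c.Nonempty) (hF : ∀ F ∈ c, IsImpFilter F) : IsImpFilter (⋃₀ c) := by
  obtain ⟨F₀, hF₀⟩ := hne
  refine isImpFilter_of_otimes_mem ⟨F₀, hF₀, (hF F₀ hF₀).1⟩ ?_ ?_
  · rintro x ⟨F, hFc, hx⟩ y hxy
    exact ⟨F, hFc, (hF F hFc).2.1 x hx y hxy⟩
  · rintro x ⟨F, hFc, hx⟩ y ⟨G, hGc, hy⟩
    rcases hc.total hFc hGc with hFG | hGF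
    · exact ⟨G, hGc, (hF G hGc).2.2.2 x (hFG hx) y hy⟩
    · exact ⟨F, hFc, (hF F hFc).2.2.2 x hx y (hGF hy)⟩

theorem isPrime_sInter_of_isChain {c : Set (Set α)} (hc : IsChain (· ⊆ ·) c)
    (hne : c.Nonempty) (hP : ∀ F ∈ c, IsPrime F) : IsPrime (⋂₀ c) := by
  obtain ⟨F₀, hF₀⟩ := hne
  refine ⟨isImpFilter_sInter fun F hF => (hP F hF).1, ?_, ?_⟩
  · exact fun h => (hP F₀ hF₀).2.1 (Set.eq_univ_of_univ_subset (h ▸ Set.sInter_subset_of_mem hF₀))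
  · intro x y hxy
    by_contra! hxy'
    obtain ⟨F, hFc, hxF⟩ : ∃ F ∈ c, x ∉ F := by simpa using hxy'.1
    obtain ⟨G, hGc, hyG⟩ : ∃ G ∈ c, y ∉ G := by simpa using hxy'.2
    -- the smaller of `F` and `G` misses both `x` and `y`
    rcases hc.total hFc hGc with hFG | hGF
    · exact ((hP F hFc).2.2 x y (hxy F hFc)).elim hxF fun hy => hyG (hFG hy)
    · exact ((hP G hGc).2.2 x y (hxy G hGc)).elim (fun hx => hxF (hGF hx)) hyG

/-- The implication filter generated by an implication filter `F` and an element `a`. -/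
def adjoin (F : Set α) (a : α) : Set α :=
  {y | ∃ m ∈ F, ∃ n : ℕ, le (otimes m (pow a n)) y}

theorem subset_adjoin (F : Set α) (a : α) : F ⊆ adjoin F a :=
  fun m hm => ⟨m, hm, 0, by rw [pow, otimes_one]; exact le_refl m⟩

theorem IsImpFilter.mem_adjoin {F : Set α} (hF : IsImpFilter F) (a : α) : a ∈ adjoin F a :=
  ⟨one α, hF.1, 1, by rw [pow, pow, one_otimes, otimes_one]; exact le_refl a⟩

theorem IsImpFilter.adjoin {F : Set α} (hF : IsImpFilter F) (a : α) :
    IsImpFilter (adjoin F a) := by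
  refine isImpFilter_of_otimes_mem ⟨one α, hF.1, 0, le_one _⟩ ?_ ?_
  · rintro x ⟨m, hm, n, hx⟩ y hxy
    exact ⟨m, hm, n, le_trans hx hxy⟩
  · rintro x ⟨m, hm, n, hx⟩ y ⟨m', hm', n', hy⟩
    refine ⟨otimes m m', hF.2.2.2 m hm m' hm', n + n', ?_⟩
    rw [pow_add, otimes_otimes_otimes_comm]
    exact otimes_le_otimes hx hy

theorem isPrime_of_maximal_not_mem {p : α} {F : Set α}
    (hF : Maximal (· ∈ {G : Set α | IsImpFilter G ∧ p ∉ G}) F) : IsPrime F := by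
  obtain ⟨⟨hFf, hpF⟩, hmax⟩ := hF
  have hadjoin : ∀ a ∉ F, ∃ m ∈ F, ∃ n : ℕ, le (otimes m (pow a n)) p := by
    intro a ha
    by_contra! hp
    exact ha (hmax ⟨hFf.adjoin a, fun ⟨m, hm, n, h⟩ => hp m hm n h⟩ (subset_adjoin F a)
      (hFf.mem_adjoin a))
  refine ⟨hFf, fun h => hpF (h ▸ Set.mem_univ p), fun x y hxy => ?_⟩
  by_contra! hxy'
  obtain ⟨m, hm, n, hx⟩ := hadjoin x hxy'.1
  obtain ⟨m', hm', k, hy⟩ := hadjoin y hxy'.2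
  have hmem : otimes (otimes m m') (pow (sup x y) (n + k)) ∈ F :=
    hFf.2.2.2 _ (hFf.2.2.2 m hm m' hm') _ (hFf.pow_mem hxy (n + k))
  refine hpF (hFf.2.1 _ hmem p (le_trans (otimes_le_otimes_left (pow_sup_add_le x y n k) _) ?_))
  refine le_trans (otimes_sup_le _ _ _) (sup_le ?_ ?_)
  · exact le_trans (otimes_le_otimes_right (otimes_le_left m m') _) hx
  · exact le_trans (otimes_le_otimes_right (otimes_le_right m m') _) hy

theorem exists_isPrime_superset_not_mem {F : Set α} (hF : IsImpFilter F) {p : α} (hp : p ∉ F) :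
    ∃ Q, IsPrime Q ∧ F ⊆ Q ∧ p ∉ Q := by
  obtain ⟨Q, hFQ, hQ⟩ := zorn_subset_nonempty {G : Set α | IsImpFilter G ∧ p ∉ G}
    (fun c hcS hc hne => ⟨⋃₀ c,
      ⟨isImpFilter_sUnion_of_isChain hc hne fun G hG => (hcS hG).1,
        fun ⟨G, hGc, hpG⟩ => (hcS hGc).2 hpG⟩,
      fun _ => Set.subset_sUnion_of_mem⟩) F ⟨hF, hp⟩
  exact ⟨Q, isPrime_of_maximal_not_mem hQ, hFQ, hQ.1.2⟩

theorem exists_isMinimalPrime_subset {Q : Set α} (hQ : IsPrime Q) :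
    ∃ m, IsMinimalPrime m ∧ m ⊆ Q := by
  obtain ⟨m, hmQ, hm⟩ := zorn_superset_nonempty {G : Set α | IsPrime G}
    (fun c hcS hc hne => ⟨⋂₀ c, isPrime_sInter_of_isChain hc hne hcS,
      fun _ => Set.sInter_subset_of_mem⟩) Q hQ
  exact ⟨m, ⟨hm.1, fun G hG hGm => subset_antisymm hGm (hm.2 hG hGm)⟩, hmQ⟩

theorem subset_of_locFilter_subset {P Q : Set α} (hQ : IsImpFilter Q) (hPQ : locFilter P ⊆ Q)
    {p : α} (hp : p ∈ P) (hpQ : p ∉ Q) : Q ⊆ P := by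
  intro x hxQ
  by_contra hxP
  have himp : imp x p ∈ Q := hPQ (subset_gen _ ⟨x, hxP, p, hp, rfl⟩)
  exact hpQ (hQ.2.1 _ (hQ.2.2.2 x hxQ _ himp) p (otimes_imp_le x p))

end MV

theorem exists_minimal_prime_avoiding_general {α : Type*} [MV α] (P : Set α)
    (p : α) (hp : p ∈ P) (hpl : p ∉ locFilter P) :
    ∃ m : Set α, IsMinimalPrime m ∧ m ⊆ P ∧ p ∉ m := by
  obtain ⟨Q, hQ, hlQ, hpQ⟩ := exists_isPrime_superset_not_mem (isImpFilter_gen _) hpl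
  have hQP : Q ⊆ P := subset_of_locFilter_subset hQ.1 hlQ hp hpQ
  obtain ⟨m, hm, hmQ⟩ := exists_isMinimalPrime_subset hQ
  exact ⟨m, hm, hmQ.trans hQP, fun hpm => hpQ (hmQ hpm)⟩

/-- For `p ∈ P \ ℓ(P)` there is a minimal prime `m ⊆ P` avoiding `p`. -/
theorem exists_minimal_prime_avoiding {α : Type*} [MV α] (P : Set α) (hP : IsPrime P)
    (p : α) (hp : p ∈ P) (hpl : p ∉ locFilter P) :
    ∃ m : Set α, IsMinimalPrime m ∧ m ⊆ P ∧ p ∉ m :=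
  exists_minimal_prime_avoiding_general P p hp hpl
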